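/- arXiv:1504.00167 — 2 statements merged into one kernel-verified Lean document; each statement's English description precedes it below -/
import Mathlib

section
/- Let V be an abelian group and 0 = V₀ ≤ V₁ ≤ … ≤ V_ℓ = V a chain of subgroups. Let H be a group of automorphisms of V such that every h ∈ H maps each Vᵢ into itself and acts trivially on each quotient V_{i+1}/V_i. Then H is nilpotent of nilpotency class at most ℓ - 1 (in particular solvable). -/
/-!
For `m : ℕ` let `K m ≤ H` consist of the elements `g` with `(g - 1) C i ≤ C (i - m)` for all `i`.
The hypothesis says `H = K 1`, and the identity `[a, b] - 1 = ((a - 1)(b - 1) - (b - 1)(a - 1)) a⁻¹ b⁻¹`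
gives `⁅K m, K k⁆ ≤ K (m + k)`. Hence the `n`-th term of the lower central series lies in `K (n + 1)`,
and `K ℓ` is trivial because `C ℓ = ⊤` and `C 0 = ⊥`.
-/

open scoped commutatorElement

namespace StabilityGroup

variable {V : Type*} [AddCommGroup V] (C : ℕ → AddSubgroup V) (ℓ : ℕ)

def Stabilizes (g : Multiplicative (AddAut V)) : Prop :=
  ∀ i ≤ ℓ, ∀ v ∈ C i, g.toAdd v ∈ C i

/-- Since `i - m` truncates, for `m ≥ i` this asks `g v - v ∈ C 0`. -/
def Shifts (m : ℕ) (g : Multiplicative (AddAut V)) : Prop :=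
  ∀ i ≤ ℓ, ∀ v ∈ C i, g.toAdd v - v ∈ C (i - m)

variable {C ℓ}

theorem shifts_one_of_sub_mem (hbot : C 0 = ⊥) {g : Multiplicative (AddAut V)}
    (hg : ∀ i < ℓ, ∀ v ∈ C (i + 1), g.toAdd v - v ∈ C i) : Shifts C ℓ 1 g := by
  rintro (_ | i) hi v hv
  · rw [hbot, AddSubgroup.mem_bot] at hv
    simp [hv, hbot]
  · exact hg i hi v hv

theorem eq_one_of_shifts (hbot : C 0 = ⊥) (htop : C ℓ = ⊤) {m : ℕ} (hm : ℓ ≤ m)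
    {g : Multiplicative (AddAut V)} (hg : Shifts C ℓ m g) : g = 1 := by
  ext v
  have hv := hg ℓ le_rfl v (htop ▸ AddSubgroup.mem_top v)
  rwa [Nat.sub_eq_zero_of_le hm, hbot, AddSubgroup.mem_bot, sub_eq_zero] at hv

theorem shifts_one (m : ℕ) : Shifts C ℓ m 1 := by
  intro i _ v _
  simp

theorem Shifts.mul {m : ℕ} {a b : Multiplicative (AddAut V)} (ha : Shifts C ℓ m a)
    (hb : Shifts C ℓ m b) (hb' : Stabilizes C ℓ b) : Shifts C ℓ m (a * b) := by
  intro i hi v hv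
  have hsplit : (a * b).toAdd v - v = (a.toAdd (b.toAdd v) - b.toAdd v) + (b.toAdd v - v) := by
    simp only [toAdd_mul, AddAut.add_apply]
    abel
  rw [hsplit]
  exact add_mem (ha i hi _ (hb' i hi v hv)) (hb i hi v hv)

theorem Shifts.inv {m : ℕ} {a : Multiplicative (AddAut V)} (ha : Shifts C ℓ m a)
    (ha' : Stabilizes C ℓ a⁻¹) : Shifts C ℓ m a⁻¹ := by
  intro i hi v hv
  have hsplit : a⁻¹.toAdd v - v = -(a.toAdd (a⁻¹.toAdd v) - a⁻¹.toAdd v) := by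
    simp only [toAdd_inv, AddAut.neg_apply, AddEquiv.apply_symm_apply]
    abel
  rw [hsplit]
  exact neg_mem (ha i hi _ (ha' i hi v hv))

theorem Shifts.commutatorElement {m k : ℕ} {a b : Multiplicative (AddAut V)}
    (ha : Shifts C ℓ m a) (hb : Shifts C ℓ k b) (ha' : Stabilizes C ℓ a⁻¹)
    (hb' : Stabilizes C ℓ b⁻¹) : Shifts C ℓ (m + k) ⁅a, b⁆ := by
  intro i hi v hv
  set x := a⁻¹.toAdd (b⁻¹.toAdd v)
  have hx : x ∈ C i := ha' i hi _ (hb' i hi v hv)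
  have hsplit : ⁅a, b⁆.toAdd v - v =
      (a.toAdd (b.toAdd x - x) - (b.toAdd x - x)) - (b.toAdd (a.toAdd x - x) - (a.toAdd x - x)) := by
    have hv : v = b.toAdd (a.toAdd x) := by simp [x]
    have hcomm : ⁅a, b⁆.toAdd v = a.toAdd (b.toAdd x) := by
      simp [commutatorElement_def, x]
    rw [hcomm, map_sub, map_sub, hv]
    abel
  have hab := ha (i - k) (by omega) _ (hb i hi x hx)
  have hba := hb (i - m) (by omega) _ (ha i hi x hx)
  rw [Nat.sub_sub, add_comm] at hab
  rw [Nat.sub_sub] at hba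
  rw [hsplit]
  exact sub_mem hab hba

variable (H : Subgroup (Multiplicative (AddAut V))) (hstab : ∀ h ∈ H, Stabilizes C ℓ h)

def depthSubgroup (m : ℕ) : Subgroup (Multiplicative (AddAut V)) where
  carrier := {g | g ∈ H ∧ Shifts C ℓ m g}
  one_mem' := ⟨H.one_mem, shifts_one m⟩
  mul_mem' := fun ⟨ha, ha'⟩ ⟨hb, hb'⟩ => ⟨H.mul_mem ha hb, ha'.mul hb' (hstab _ hb)⟩
  inv_mem' := fun ⟨ha, ha'⟩ => ⟨H.inv_mem ha, ha'.inv (hstab _ (H.inv_mem ha))⟩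

theorem commutatorElement_mem_depthSubgroup {m k : ℕ} {a b : Multiplicative (AddAut V)}
    (ha : a ∈ depthSubgroup H hstab m) (hb : b ∈ depthSubgroup H hstab k) :
    ⁅a, b⁆ ∈ depthSubgroup H hstab (m + k) :=
  ⟨H.mul_mem (H.mul_mem (H.mul_mem ha.1 hb.1) (H.inv_mem ha.1)) (H.inv_mem hb.1),
    ha.2.commutatorElement hb.2 (hstab _ (H.inv_mem ha.1)) (hstab _ (H.inv_mem hb.1))⟩

theorem lowerCentralSeries_le_depthSubgroup (hH : ∀ h ∈ H, Shifts C ℓ 1 h) (n : ℕ) :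
    H.lowerCentralSeries n ≤ depthSubgroup H hstab (n + 1) := by
  induction n with
  | zero => exact fun h hh => ⟨hh, hH h hh⟩
  | succ n ih =>
    rw [Subgroup.lowerCentralSeries_succ, Subgroup.commutator_le]
    exact fun a ha b hb => commutatorElement_mem_depthSubgroup H hstab (ih ha) ⟨hb, hH b hb⟩

end StabilityGroup

theorem stmt1_general (V : Type*) [AddCommGroup V] (ℓ : ℕ)
    (C : ℕ → AddSubgroup V) (hbot : C 0 = ⊥) (htop : C ℓ = ⊤)
    (H : Subgroup (Multiplicative (AddAut V)))
    (hstab : ∀ h ∈ H, ∀ i ≤ ℓ, ∀ v ∈ C i, Multiplicative.toAdd h v ∈ C i)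
    (htriv : ∀ h ∈ H, ∀ i < ℓ, ∀ v ∈ C (i + 1), Multiplicative.toAdd h v - v ∈ C i) :
    lowerCentralSeries H (ℓ - 1) = ⊥ := by
  have hH : ∀ h ∈ H, StabilityGroup.Shifts C ℓ 1 h := fun h hh =>
    StabilityGroup.shifts_one_of_sub_mem hbot (htriv h hh)
  refine (Subgroup.eq_bot_iff_forall _).2 fun g hg => ?_
  exact StabilityGroup.eq_one_of_shifts hbot htop (by omega)
    (StabilityGroup.lowerCentralSeries_le_depthSubgroup H hstab hH (ℓ - 1) hg).2

/-- Kaloujnine's stability group bound: if a group `H` of (additive) automorphisms of an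
abelian group `V` stabilizes a chain `⊥ = C 0 ≤ C 1 ≤ … ≤ C ℓ = ⊤` of subgroups and acts
trivially on all successive quotients, then `H` is nilpotent of class at most `ℓ - 1`. -/
theorem stmt1 (V : Type*) [AddCommGroup V] (ℓ : ℕ) (hℓ : 1 ≤ ℓ)
    (C : ℕ → AddSubgroup V) (hbot : C 0 = ⊥) (htop : C ℓ = ⊤)
    (hchain : ∀ i < ℓ, C i ≤ C (i + 1))
    (H : Subgroup (Multiplicative (AddAut V)))
    (hstab : ∀ h ∈ H, ∀ i ≤ ℓ, ∀ v ∈ C i, Multiplicative.toAdd h v ∈ C i)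
    (htriv : ∀ h ∈ H, ∀ i < ℓ, ∀ v ∈ C (i + 1), Multiplicative.toAdd h v - v ∈ C i) :
    lowerCentralSeries H (ℓ - 1) = ⊥ :=
  stmt1_general V ℓ C hbot htop H hstab htriv
end

section
/- Let G be a finite group with a strongly embedded subgroup H: H is a proper subgroup of even order such that H ∩ H^g has odd order for every g ∈ G ∖ H. Then all involutions of G are conjugate in G. -/
/-!
If `x, y` are involutions, `x` and `y` both invert `w = x * y`, so they generate a dihedral group.
When `w` has odd order `2k + 1`, conjugating by `w ^ k` carries `x` to `y`; when it has even order
`2m`, `w ^ m` is an involution commuting with both `x` and `y`. In a strongly embedded subgroup `H`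
the centralizer of an involution of `H` lies in `H`, so the even case cannot occur for `x ∈ H` and
`y ∉ H`: every involution outside `H` is conjugate to every involution inside `H`. Since `H` has
even order and is proper, both kinds of involutions exist, and all involutions are conjugate.
-/

lemma Subgroup.notMem_of_odd_natCard {G : Type*} [Group G] {K : Subgroup G}
    (hK : Odd (Nat.card K)) {x : G} (hx : orderOf x = 2) : x ∉ K := fun hxK =>
  Nat.not_even_iff_odd.mpr hK (even_iff_two_dvd.mpr (hx ▸ K.orderOf_dvd_natCard hxK))

section Dihedral

variable {G : Type*} [Group G] {x y : G}

lemma conj_mul_eq_inv_of_orderOf_eq_two (hx : orderOf x = 2) (hy : orderOf y = 2) :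
    x * (x * y) * x⁻¹ = (x * y)⁻¹ := by
  rw [mul_inv_rev, inv_eq_self_of_orderOf_eq_two hx, inv_eq_self_of_orderOf_eq_two hy,
    ← mul_assoc, ← pow_two, ← hx, pow_orderOf_eq_one, one_mul]

lemma conj_mul_pow_eq_inv_pow_of_orderOf_eq_two (hx : orderOf x = 2) (hy : orderOf y = 2)
    (n : ℕ) : x * (x * y) ^ n * x⁻¹ = (x * y)⁻¹ ^ n := by
  rw [← conj_pow, conj_mul_eq_inv_of_orderOf_eq_two hx hy]

lemma isConj_of_odd_orderOf_mul (hx : orderOf x = 2) (hy : orderOf y = 2)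
    (hodd : Odd (orderOf (x * y))) : IsConj x y := by
  obtain ⟨k, hk⟩ := hodd
  set w := x * y with hw
  have hw2k : w ^ (2 * k) = w⁻¹ :=
    eq_inv_of_mul_eq_one_left (by rw [← pow_succ, ← hk, pow_orderOf_eq_one])
  have hxk : x * (w ^ k)⁻¹ * x⁻¹ = w ^ k := by
    rw [← conj_inv, conj_mul_pow_eq_inv_pow_of_orderOf_eq_two hx hy, inv_pow, inv_inv]
  refine isConj_iff.mpr ⟨w ^ k, ?_⟩
  calc w ^ k * x * (w ^ k)⁻¹ = w ^ k * (x * (w ^ k)⁻¹ * x⁻¹) * x := by group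
    _ = w ^ (2 * k) * x := by rw [hxk, two_mul, pow_add]
    _ = y := by rw [hw2k, hw, mul_inv_rev, inv_mul_cancel_right, inv_eq_self_of_orderOf_eq_two hy]

lemma exists_orderOf_eq_two_commute_of_even_orderOf_mul (hx : orderOf x = 2)
    (hy : orderOf y = 2) (hfin : IsOfFinOrder (x * y)) (heven : Even (orderOf (x * y))) :
    ∃ z : G, orderOf z = 2 ∧ Commute x z ∧ Commute y z := by
  set w := x * y
  set z := w ^ (orderOf w / 2)
  have hz : orderOf z = 2 := orderOf_pow_orderOf_div hfin.orderOf_pos.ne' heven.two_dvd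
  have hxz : Commute x z := by
    have h := conj_mul_pow_eq_inv_pow_of_orderOf_eq_two hx hy (orderOf w / 2)
    rw [inv_pow, inv_eq_self_of_orderOf_eq_two hz, mul_inv_eq_iff_eq_mul] at h
    exact h
  have hyz : Commute (x⁻¹ * w) z := hxz.inv_left.mul_left (Commute.self_pow w _)
  rw [inv_mul_cancel_left] at hyz
  exact ⟨z, hz, hxz, hyz⟩

end Dihedral

namespace Subgroup

variable {G : Type*} [Group G]

def OddIntersectsConjugates (H : Subgroup G) : Prop :=
  ∀ g : G, g ∉ H → Odd (Nat.card (H ⊓ H.map (MulAut.conj g⁻¹).toMonoidHom : Subgroup G))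

variable {H : Subgroup G}

lemma OddIntersectsConjugates.mem_of_commute (hH : H.OddIntersectsConjugates) {x y : G}
    (hx : orderOf x = 2) (hxH : x ∈ H) (hxy : Commute x y) : y ∈ H := by
  by_contra hyH
  refine notMem_of_odd_natCard (hH y hyH) hx ⟨hxH, x, hxH, ?_⟩
  change MulAut.conj y⁻¹ x = x
  rw [MulAut.conj_apply, inv_inv, mul_assoc, hxy.eq, inv_mul_cancel_left]

lemma OddIntersectsConjugates.conj_notMem (hH : H.OddIntersectsConjugates) {g t : G}
    (hg : g ∉ H) (ht : orderOf t = 2) (htH : t ∈ H) : MulAut.conj g t ∉ H := fun hsH =>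
  notMem_of_odd_natCard (hH g hg) ht ⟨htH, _, hsH, by simp [MulAut.conj_apply, mul_assoc]⟩

lemma OddIntersectsConjugates.isConj [Finite G] (hH : H.OddIntersectsConjugates) {x y : G}
    (hx : orderOf x = 2) (hy : orderOf y = 2) (hxH : x ∈ H) (hyH : y ∉ H) : IsConj x y := by
  rcases Nat.even_or_odd (orderOf (x * y)) with heven | hodd
  · obtain ⟨z, hz, hxz, hyz⟩ :=
      exists_orderOf_eq_two_commute_of_even_orderOf_mul hx hy (isOfFinOrder_of_finite _) heven
    exact absurd (hH.mem_of_commute hz (hH.mem_of_commute hx hxH hxz) hyz.symm) hyH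
  · exact isConj_of_odd_orderOf_mul hx hy hodd

end Subgroup

theorem stmt17_general (G : Type*) [Group G] [Finite G] (H : Subgroup G)
    (hproper : H ≠ ⊤) (heven : Even (Nat.card H))
    (hstrong : ∀ g : G, g ∉ H →
      Odd (Nat.card (H ⊓ H.map (MulAut.conj g⁻¹).toMonoidHom : Subgroup G))) :
    ∀ i j : G, orderOf i = 2 → orderOf j = 2 → IsConj i j := by
  have hH : H.OddIntersectsConjugates := hstrong
  obtain ⟨t, ht⟩ := exists_prime_orderOf_dvd_card' 2 heven.two_dvd
  rw [← Subgroup.orderOf_coe] at ht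
  obtain ⟨g, hg⟩ : ∃ g, g ∉ H := by simpa [Subgroup.eq_top_iff'] using hproper
  set s := MulAut.conj g (t : G)
  have hs : orderOf s = 2 := ((MulAut.conj g).orderOf_eq _).trans ht
  have hsH : s ∉ H := hH.conj_notMem hg ht t.2
  have hconj : ∀ x : G, orderOf x = 2 → IsConj x s := fun x hx => by
    by_cases hxH : x ∈ H
    · exact hH.isConj hx hs hxH hsH
    · exact (hH.isConj ht hx t.2 hxH).symm.trans (hH.isConj ht hs t.2 hsH)
  intro i j hi hj
  exact (hconj i hi).trans (hconj j hj).symm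

/-- Bender: a finite group with a strongly embedded subgroup has a single conjugacy class
of involutions. -/
theorem stmt17 (G : Type*) [Group G] [Finite G] (H : Subgroup G)
    (hproper : H ≠ ⊤) (heven : Even (Nat.card H)) (hpos : 0 < Nat.card H)
    (hstrong : ∀ g : G, g ∉ H →
      Odd (Nat.card (H ⊓ H.map (MulAut.conj g⁻¹).toMonoidHom : Subgroup G))) :
    ∀ i j : G, orderOf i = 2 → orderOf j = 2 → IsConj i j :=
  stmt17_general G H hproper heven hstrong
end
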